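/- Let F be a field, ε ∈ F a nonsquare (char F ≠ 2). Then every nonzero nilpotent element n of sl₂(F) satisfies tr(x·n) ≠ 0, where x = [[0,1],[ε,0]]. -/
import Mathlib


/-- For a field `F` of characteristic `≠ 2` and a nonsquare `ε`, every nonzero
nilpotent element `n` of `sl₂(F)` satisfies `tr(x·n) ≠ 0`, where `x = [[0,1],[ε,0]]`. -/
theorem trace_pairing_nonzero_on_nilpotents (F : Type*) [Field F] (hchar : ringChar F ≠ 2)
    (ε : F) (hε : ¬ IsSquare ε)
    (n : Matrix (Fin 2) (Fin 2) F) (htr : n.trace = 0) (hn0 : n ≠ 0) (hnil : n ^ 2 = 0) :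
    ((!![0, 1; ε, 0] : Matrix (Fin 2) (Fin 2) F) * n).trace ≠ 0 := by
  rw [Matrix.trace_fin_two] at htr
  have h00 : n 0 0 * n 0 0 + n 0 1 * n 1 0 = 0 := by
    have := congrFun (congrFun hnil 0) 0
    simpa [pow_two, Matrix.mul_apply, Fin.sum_univ_two] using this
  intro h
  have htrace : n 1 0 + ε * n 0 1 = 0 := by
    rw [Matrix.trace_fin_two] at h
    simp [Matrix.mul_apply, Fin.sum_univ_two] at h
    linear_combination h
  by_cases hbz : n 0 1 = 0
  · have hcz : n 1 0 = 0 := by simpa [hbz] using htrace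
    have haz : n 0 0 = 0 := by
      have : n 0 0 * n 0 0 = 0 := by linear_combination h00 - n 1 0 * hbz
      exact mul_self_eq_zero.mp this
    have hdz : n 1 1 = 0 := by linear_combination htr - haz
    apply hn0
    ext i j
    fin_cases i <;> fin_cases j <;> simp [haz, hbz, hcz, hdz]
  · apply hε
    refine ⟨n 0 0 / n 0 1, ?_⟩
    rw [div_mul_div_comm, eq_div_iff (mul_ne_zero hbz hbz)]
    linear_combination n 0 1 * htrace - h00
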